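/- arXiv:1911.08722 — 5 statements merged into one kernel-verified Lean document; each statement's English description precedes it below -/
import Mathlib

section
/- Let k ≥ 0 and let P_{2k+1} ∈ ℚ[X,Y] be the polynomial with t^{2k+1} + s^{2k+1} = P_{2k+1}(t+s, t²+s²). Then every monomial X^i Y^j appearing in P_{2k+1} satisfies i + 2j = 2k+1, the coefficient of X Y^k in P_{2k+1} equals (2k+1)/2^k, and every other monomial X^i Y^j appearing in P_{2k+1} has total degree i + j ≥ k + 2. -/
/-!
Newton's identity `tⁿ⁺² + sⁿ⁺² = (t + s)(tⁿ⁺¹ + sⁿ⁺¹) - ts(tⁿ + sⁿ)` with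
`ts = ((t + s)² - (t² + s²)) / 2` defines explicit polynomials `Pₙ(X, Y)`, weighted homogeneous
of degree `n` by induction. They are the only ones: `(t, s) ↦ (t + s, t² + s²)` covers the
region `x² ≤ 2y`, which contains a box with infinite sides. Modulo `X²` the recurrence reads
`Pₙ₊₂ ≡ X Pₙ₊₁ + Y Pₙ / 2`, so the coefficient of `Yᵏ` in `P₂ₖ` is `2 / 2ᵏ` and the coefficient
`lₖ` of `X Yᵏ` in `P₂ₖ₊₁` satisfies `lₖ₊₁ = 2 / 2ᵏ⁺¹ + lₖ / 2`, whence `lₖ = (2k + 1) / 2ᵏ`.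
The degree bound follows from `i + 2j = 2k + 1` and `j ≠ k`.
-/

open MvPolynomial

noncomputable def newtonStep (a b : MvPolynomial (Fin 2) ℚ) : MvPolynomial (Fin 2) ℚ :=
  X 0 * a + C 2⁻¹ * (X 1 - X 0 ^ 2) * b

noncomputable def powerSumPoly : ℕ → MvPolynomial (Fin 2) ℚ
  | 0 => C 2
  | 1 => X 0
  | n + 2 => newtonStep (powerSumPoly (n + 1)) (powerSumPoly n)

lemma powerSumPoly_add_two (n : ℕ) :
    powerSumPoly (n + 2) = newtonStep (powerSumPoly (n + 1)) (powerSumPoly n) :=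
  rfl

lemma aeval_powerSumPoly {R : Type*} [CommRing R] [Algebra ℚ R] (t s : R) (n : ℕ) :
    aeval ![t + s, t ^ 2 + s ^ 2] (powerSumPoly n) = t ^ n + s ^ n := by
  have half : algebraMap ℚ R 2⁻¹ * 2 = 1 := by
    rw [← map_ofNat (algebraMap ℚ R) 2, ← map_mul]; norm_num
  induction n using Nat.twoStepInduction with
  | zero => simp [powerSumPoly, one_add_one_eq_two, map_ofNat]
  | one => simp [powerSumPoly]
  | more n ih ih' =>
    simp only [powerSumPoly_add_two, newtonStep, map_add, map_mul, map_sub, map_pow, aeval_X,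
      aeval_C, Matrix.cons_val_zero, Matrix.cons_val_one, ih, ih']
    linear_combination (-(t * s * (t ^ n + s ^ n))) * half

lemma isWeightedHomogeneous_powerSumPoly (n : ℕ) :
    (powerSumPoly n).IsWeightedHomogeneous ![1, 2] n := by
  have hX0 : (X 0 : MvPolynomial (Fin 2) ℚ).IsWeightedHomogeneous ![1, 2] 1 :=
    isWeightedHomogeneous_X ℚ _ 0
  have hX1 : (X 1 : MvPolynomial (Fin 2) ℚ).IsWeightedHomogeneous ![1, 2] 2 :=
    isWeightedHomogeneous_X ℚ _ 1
  induction n using Nat.twoStepInduction with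
  | zero => exact isWeightedHomogeneous_C _ _
  | one => exact hX0
  | more n ih ih' =>
    rw [powerSumPoly_add_two, newtonStep]
    refine ((by omega : 1 + (n + 1) = n + 2) ▸ hX0.mul ih').add ?_
    have := ((hX1.sub (hX0.pow 2)).C_mul 2⁻¹).mul ih
    rwa [add_comm 2 n] at this

lemma weight_fin_two (w : Fin 2 → ℕ) (d : Fin 2 →₀ ℕ) :
    Finsupp.weight w d = d 0 * w 0 + d 1 * w 1 := by
  simp [Finsupp.weight_apply, Finsupp.sum_fintype, Fin.sum_univ_two]

lemma coeff_add_single_one_C_mul_X_one_sub_X_zero_sq_mul {m : Fin 2 →₀ ℕ} (hm : m 0 < 2)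
    (c : ℚ) (b : MvPolynomial (Fin 2) ℚ) :
    coeff (m + Finsupp.single 1 1) (C c * (X 1 - X 0 ^ 2) * b) = c * coeff m b := by
  have hsq : coeff (m + Finsupp.single 1 1) (X 0 ^ 2 * b) = 0 := by
    rw [X_pow_eq_monomial, coeff_monomial_mul', if_neg]
    exact fun h ↦ absurd (h 0) (by simpa using hm)
  rw [mul_assoc, coeff_C_mul, sub_mul, coeff_sub, hsq, add_comm, coeff_X_mul, sub_zero]

lemma coeff_single_one_succ_newtonStep (a b : MvPolynomial (Fin 2) ℚ) (j : ℕ) :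
    coeff (Finsupp.single 1 (j + 1)) (newtonStep a b) = coeff (Finsupp.single 1 j) b / 2 := by
  rw [newtonStep, Finsupp.single_add, coeff_add,
    coeff_add_single_one_C_mul_X_one_sub_X_zero_sq_mul (by simp), coeff_X_mul', if_neg (by simp)]
  ring

lemma coeff_single_zero_one_add_single_one_succ_newtonStep (a b : MvPolynomial (Fin 2) ℚ) (j : ℕ) :
    coeff (Finsupp.single 0 1 + Finsupp.single 1 (j + 1)) (newtonStep a b) =
      coeff (Finsupp.single 1 (j + 1)) a +
        coeff (Finsupp.single 0 1 + Finsupp.single 1 j) b / 2 := by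
  rw [newtonStep, coeff_add, coeff_X_mul, Finsupp.single_add, ← add_assoc,
    coeff_add_single_one_C_mul_X_one_sub_X_zero_sq_mul (by simp)]
  ring

lemma coeff_powerSumPoly (k : ℕ) :
    coeff (Finsupp.single 1 k) (powerSumPoly (2 * k)) = 2 / 2 ^ k ∧
      coeff (Finsupp.single 0 1 + Finsupp.single 1 k) (powerSumPoly (2 * k + 1)) =
        (2 * k + 1) / 2 ^ k := by
  induction k with
  | zero => simp [powerSumPoly, coeff_X]
  | succ k ih =>
    have heven :
        coeff (Finsupp.single 1 (k + 1)) (powerSumPoly (2 * (k + 1))) = 2 / 2 ^ (k + 1) := by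
      rw [mul_add_one, powerSumPoly_add_two, coeff_single_one_succ_newtonStep, ih.1, pow_succ]
      ring
    refine ⟨heven, ?_⟩
    rw [show 2 * (k + 1) + 1 = 2 * k + 1 + 2 by ring, powerSumPoly_add_two,
      coeff_single_zero_one_add_single_one_succ_newtonStep, ih.2,
      show 2 * k + 1 + 1 = 2 * (k + 1) by ring, heven, pow_succ]
    push_cast
    ring

lemma exists_add_eq_sq_add_sq_eq {x y : ℝ} (h : x ^ 2 ≤ 2 * y) :
    ∃ t s : ℝ, t + s = x ∧ t ^ 2 + s ^ 2 = y := by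
  set d := √(2 * y - x ^ 2)
  have hd : d ^ 2 = 2 * y - x ^ 2 := Real.sq_sqrt (by linarith)
  exact ⟨(x + d) / 2, (x - d) / 2, by ring, by linear_combination hd / 2⟩

lemma eq_of_aeval_add_sq_add_sq_eq {K : Type*} [Field K] [Algebra K ℝ]
    {p q : MvPolynomial (Fin 2) K}
    (h : ∀ t s : ℝ, aeval ![t + s, t ^ 2 + s ^ 2] p = aeval ![t + s, t ^ 2 + s ^ 2] q) :
    p = q := by
  apply map_injective _ (algebraMap K ℝ).injective
  refine funext_set ![Set.Icc 0 1, Set.Ici 1] (fun i ↦ ?_) fun v hv ↦ ?_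
  · fin_cases i
    exacts [Set.Icc_infinite zero_lt_one, Set.Ici_infinite 1]
  · have hv0 := hv 0 trivial
    have hv1 := hv 1 trivial
    simp only [Matrix.cons_val_zero, Matrix.cons_val_one, Set.mem_Icc, Set.mem_Ici] at hv0 hv1
    obtain ⟨t, s, hx, hy⟩ := exists_add_eq_sq_add_sq_eq (x := v 0) (y := v 1) (by nlinarith)
    have hv : v = ![t + s, t ^ 2 + s ^ 2] := by
      ext i; fin_cases i <;> simp [hx, hy]
    simpa [hv, eval_map, ← aeval_def] using h t s

theorem odd_power_sum_polynomial_structure (k : ℕ) (P : MvPolynomial (Fin 2) ℚ)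
    (hP : ∀ t s : ℝ,
      t ^ (2 * k + 1) + s ^ (2 * k + 1) =
        MvPolynomial.aeval ![t + s, t ^ 2 + s ^ 2] P) :
    (∀ d ∈ P.support, d 0 + 2 * d 1 = 2 * k + 1) ∧
    MvPolynomial.coeff (Finsupp.single 0 1 + Finsupp.single 1 k) P
      = (2 * k + 1 : ℚ) / 2 ^ k ∧
    (∀ d ∈ P.support, d ≠ Finsupp.single 0 1 + Finsupp.single 1 k →
      k + 2 ≤ d 0 + d 1) := by
  obtain rfl : P = powerSumPoly (2 * k + 1) :=
    eq_of_aeval_add_sq_add_sq_eq fun t s ↦ by rw [← hP, aeval_powerSumPoly]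
  have hweight : ∀ d ∈ (powerSumPoly (2 * k + 1)).support, d 0 + 2 * d 1 = 2 * k + 1 := by
    intro d hd
    simpa [weight_fin_two, mul_comm] using
      isWeightedHomogeneous_powerSumPoly _ (mem_support_iff.mp hd)
  refine ⟨hweight, (coeff_powerSumPoly k).2, fun d hd hne ↦ ?_⟩
  have hw := hweight d hd
  have hk : d 1 ≠ k := fun hdk ↦ hne <| by
    ext i; fin_cases i <;> simp <;> omega
  omega
end

section
/- Let 0 < δ ≤ σ/10 and let a, b ∈ [0,1] with b − a ≥ σ > 0. Then there exists a constant c > 0 (independent of a, b, δ, σ) such that the image of [a, a+δ] × [b, b+δ] under Φ(t,s) = (t+s, t²+s²) contains the open ball of radius c·σ·δ centered at Φ(a + δ/2, b + δ/2). -/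
/-!
In the coordinates `u = t + s`, `w = s - t` the map `Φ(t, s) = (t + s, t² + s²)` becomes
`(u, w) ↦ (u, (u² + w²) / 2)`, and the square `[a, a + δ] × [b, b + δ]` becomes the diamond
`|u - u₀| + |w - w₀| ≤ δ` around `u₀ = a + b + δ`, `w₀ = b - a ≥ σ`. A point `(u, v)` is hit by
`w = √(2v - u²)`, and `w` moves from `w₀` by at most `|2v - u² - w₀²| / w₀`; since `w₀ ≥ σ`, this is
`O(r / σ)` for `(u, v)` within `r` of the centre, so the radius `r = cσδ` works.
-/

lemma sum_sq_of_half_sub_add (u w : ℝ) :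
    ((u - w) / 2 + (u + w) / 2, ((u - w) / 2) ^ 2 + ((u + w) / 2) ^ 2) = (u, (u ^ 2 + w ^ 2) / 2) := by
  ext <;> ring

lemma half_sub_add_mem_Icc_prod {a b δ u w : ℝ} (h : |u - (a + b + δ)| + |w - (b - a)| ≤ δ) :
    ((u - w) / 2, (u + w) / 2) ∈ Set.Icc a (a + δ) ×ˢ Set.Icc b (b + δ) := by
  have := le_abs_self (u - (a + b + δ)); have := neg_abs_le (u - (a + b + δ))
  have := le_abs_self (w - (b - a)); have := neg_abs_le (w - (b - a))
  refine ⟨⟨?_, ?_⟩, ?_, ?_⟩ <;> linarith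

lemma abs_sub_mul_le_abs_sq_sub {x y : ℝ} (hx : 0 ≤ x) (hy : 0 ≤ y) :
    |x - y| * y ≤ |x ^ 2 - y ^ 2| := by
  rw [sq_sub_sq, abs_mul, abs_of_nonneg (add_nonneg hx hy), mul_comm]
  gcongr
  linarith

lemma exists_sq_eq_abs_sub_le {D w₀ ε : ℝ} (hw₀ : 0 < w₀) (hε : ε ≤ w₀)
    (h : |D - w₀ ^ 2| ≤ w₀ * ε) : ∃ w, w ^ 2 = D ∧ |w - w₀| ≤ ε := by
  have hD : 0 ≤ D := by
    nlinarith [neg_abs_le (D - w₀ ^ 2)]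
  refine ⟨√D, Real.sq_sqrt hD, le_of_mul_le_mul_right ?_ hw₀⟩
  calc |√D - w₀| * w₀ ≤ |√D ^ 2 - w₀ ^ 2| := abs_sub_mul_le_abs_sq_sub (Real.sqrt_nonneg D) hw₀.le
    _ ≤ ε * w₀ := by rw [Real.sq_sqrt hD, mul_comm]; exact h

theorem image_of_transverse_square_contains_ball :
    ∃ c : ℝ, 0 < c ∧
      ∀ δ σ a b : ℝ, 0 < δ → δ ≤ σ / 10 → 0 < σ →
        a ∈ Set.Icc (0 : ℝ) 1 → b ∈ Set.Icc (0 : ℝ) 1 → σ ≤ b - a →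
        Metric.ball
            ((fun q : ℝ × ℝ => (q.1 + q.2, q.1 ^ 2 + q.2 ^ 2)) (a + δ / 2, b + δ / 2))
            (c * σ * δ) ⊆
          (fun q : ℝ × ℝ => (q.1 + q.2, q.1 ^ 2 + q.2 ^ 2)) ''
            (Set.Icc a (a + δ) ×ˢ Set.Icc b (b + δ)) := by
  refine ⟨1 / 20, by norm_num, fun δ σ a b hδ hδσ hσ ⟨ha₀, _⟩ ⟨_, hb₁⟩ hba ⟨u, v⟩ hp => ?_⟩
  set u₀ := a + b + δ
  set w₀ := b - a
  have hcentre : ((a + δ / 2) + (b + δ / 2), (a + δ / 2) ^ 2 + (b + δ / 2) ^ 2)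
      = (u₀, (u₀ ^ 2 + w₀ ^ 2) / 2) := by
    ext <;> simp only [u₀, w₀] <;> ring
  beta_reduce at hp
  rw [hcentre, Metric.mem_ball, Prod.dist_eq, max_lt_iff, Real.dist_eq, Real.dist_eq] at hp
  obtain ⟨hu, hv⟩ := hp
  have hsum : |u + u₀| ≤ 5 := by
    have := abs_lt.mp hu
    rw [abs_le]; constructor <;> nlinarith
  have hkey : |(2 * v - u ^ 2) - w₀ ^ 2| ≤ w₀ * (δ / 2) := calc
    _ = |2 * (v - (u₀ ^ 2 + w₀ ^ 2) / 2) - (u - u₀) * (u + u₀)| := by congr 1; ring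
    _ ≤ 2 * |v - (u₀ ^ 2 + w₀ ^ 2) / 2| + |u - u₀| * |u + u₀| := by
      grw [abs_sub, abs_mul, abs_mul, abs_two]
    _ ≤ 7 * (1 / 20 * σ * δ) := by nlinarith [abs_nonneg (u - u₀)]
    _ ≤ w₀ * (δ / 2) := by nlinarith
  obtain ⟨w, hw, hww₀⟩ := exists_sq_eq_abs_sub_le (by linarith) (by linarith) hkey
  refine ⟨_, half_sub_add_mem_Icc_prod (by nlinarith : |u - u₀| + |w - w₀| ≤ δ), ?_⟩
  exact (sum_sq_of_half_sub_add u w).trans (by rw [hw]; ring_nf)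
end

section
/- Let N ≥ 1 and let z₁, …, z_N be complex numbers with z = z₁ + ⋯ + z_N. Then either |z| ≤ 10·max_{1 ≤ i ≤ N} |z_i|, or there exist indices i, j with |i − j| ≥ 2 such that |z| ≤ 2N·(|z_i|·|z_j|)^{1/2}. -/
/-!
If `|z| > 10 max |zᵢ|`, call `i` heavy when `|zᵢ| ≥ |z| / 2N`. The light terms contribute at most
`N · |z| / 2N = |z| / 2` to `Σ |zᵢ| ≥ |z|`, so the heavy ones carry at least `|z| / 2`, which forces
more than five heavy indices. The smallest and largest of them are then at distance at least two,
and any two heavy indices satisfy `|z|² ≤ (2N)² |zᵢ| |zⱼ|`.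
-/

open Finset

theorem sum_le_card_mul_add_sum_filter_le {ι : Type*} (s : Finset ι) (f : ι → ℝ) {t : ℝ}
    (ht : 0 ≤ t) : ∑ i ∈ s, f i ≤ #s * t + ∑ i ∈ s with t ≤ f i, f i := by
  rw [← sum_filter_not_add_sum_filter s (fun i => t ≤ f i)]
  gcongr
  calc ∑ i ∈ s with ¬t ≤ f i, f i ≤ #{i ∈ s | ¬t ≤ f i} * t :=
        (sum_le_card_nsmul _ _ _ fun i hi => (not_le.mp (mem_filter.mp hi).2).le).trans_eq
          (nsmul_eq_mul _ _)
    _ ≤ #s * t := by gcongr; exact filter_subset _ _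

theorem exists_two_le_abs_sub_of_three_le_card {N : ℕ} (s : Finset (Fin N)) (hs : 3 ≤ #s) :
    ∃ i ∈ s, ∃ j ∈ s, 2 ≤ |(i : ℤ) - j| := by
  have hne : s.Nonempty := card_pos.mp (by omega)
  have hspan : #s ≤ s.max' hne + 1 - s.min' hne := by
    rw [← Fin.card_Icc]
    exact card_le_card fun i hi => mem_Icc.mpr ⟨min'_le s i hi, le_max' s i hi⟩
  refine ⟨_, max'_mem s hne, _, min'_mem s hne, ?_⟩
  rw [abs_of_nonneg (by omega)]
  omega

section HeavyIndices

variable {ι E : Type*} [Fintype ι] [SeminormedAddCommGroup E]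

noncomputable def heavyIndices (z : ι → E) : Finset ι :=
  {i | ‖∑ j, z j‖ / (2 * Fintype.card ι) ≤ ‖z i‖}

theorem norm_sum_le_two_mul_card_heavyIndices_mul (z : ι → E) {M : ℝ} (hM : ∀ i, ‖z i‖ ≤ M) :
    ‖∑ i, z i‖ ≤ 2 * #(heavyIndices z) * M := by
  set Z := ‖∑ i, z i‖
  set n : ℝ := (Fintype.card ι : ℝ)
  have hlight : n * (Z / (2 * n)) ≤ Z / 2 := by
    rcases eq_or_ne n 0 with hn | hn
    · simp only [hn, zero_mul]
      positivity
    · exact (by field_simp : n * (Z / (2 * n)) = Z / 2).le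
  have hheavy : ∑ i ∈ heavyIndices z, ‖z i‖ ≤ #(heavyIndices z) * M :=
    (sum_le_card_nsmul _ _ _ fun i _ => hM i).trans_eq (nsmul_eq_mul _ _)
  have hsplit : Z ≤ n * (Z / (2 * n)) + ∑ i ∈ heavyIndices z, ‖z i‖ := by
    have := sum_le_card_mul_add_sum_filter_le univ (fun i => ‖z i‖) (t := Z / (2 * n))
      (by positivity)
    rw [card_univ] at this
    exact (norm_sum_le _ _).trans this
  linarith

theorem norm_sum_le_two_mul_card_mul_sqrt [Nonempty ι] {z : ι → E} {i j : ι} (hi : i ∈ heavyIndices z)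
    (hj : j ∈ heavyIndices z) :
    ‖∑ k, z k‖ ≤ 2 * Fintype.card ι * √(‖z i‖ * ‖z j‖) := by
  simp only [heavyIndices, mem_filter, mem_univ, true_and] at hi hj
  set t := ‖∑ k, z k‖ / (2 * Fintype.card ι)
  have ht : 0 ≤ t := by positivity
  have hsqrt : t ≤ √(‖z i‖ * ‖z j‖) :=
    Real.le_sqrt_of_sq_le (by rw [sq]; exact mul_le_mul hi hj ht (ht.trans hi))
  have hn : (0 : ℝ) < Fintype.card ι := by exact_mod_cast Fintype.card_pos
  calc ‖∑ k, z k‖ = 2 * Fintype.card ι * t := by simp only [t]; field_simp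
    _ ≤ 2 * Fintype.card ι * √(‖z i‖ * ‖z j‖) := by gcongr

end HeavyIndices

theorem broad_narrow_dichotomy (N : ℕ) (hN : 1 ≤ N) (z : Fin N → ℂ) :
    ‖∑ i, z i‖ ≤
        10 * (Finset.univ.sup' ⟨⟨0, hN⟩, Finset.mem_univ _⟩
          fun i => ‖z i‖) ∨
      ∃ i j : Fin N, 2 ≤ |(i : ℤ) - (j : ℤ)| ∧
        ‖∑ i, z i‖ ≤
          2 * N * Real.sqrt (‖z i‖ * ‖z j‖) := by
  set M := Finset.univ.sup' ⟨⟨0, hN⟩, Finset.mem_univ _⟩ fun i => ‖z i‖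
  have hM : ∀ i, ‖z i‖ ≤ M := fun i => le_sup' (fun i => ‖z i‖) (mem_univ i)
  have hM0 : 0 ≤ M := (norm_nonneg _).trans (hM ⟨0, hN⟩)
  refine (le_or_gt ‖∑ i, z i‖ (10 * M)).imp id fun hbig => ?_
  have hcard : 3 ≤ #(heavyIndices z) := by
    by_contra! hsmall
    have : (#(heavyIndices z) : ℝ) ≤ 5 := by exact_mod_cast (by omega : #(heavyIndices z) ≤ 5)
    nlinarith [norm_sum_le_two_mul_card_heavyIndices_mul z hM]
  have : Nonempty (Fin N) := ⟨⟨0, hN⟩⟩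
  obtain ⟨i, hi, j, hj, hij⟩ := exists_two_le_abs_sub_of_three_le_card _ hcard
  exact ⟨i, j, hij, by simpa using norm_sum_le_two_mul_card_mul_sqrt hi hj⟩
end

section
/- Let i ≥ 1 and let α, β be real numbers. For l = 0, …, i−1 define the homogeneous polynomials r_l(t,s) = (t + 2αs)^{i−1−l}(t + 2βs)^{l}. Then the i × i matrix M with entries M_{m,l} = (1/((i−1−m)!·m!)) · ∂^{i−1} r_l / ∂t^{i−1−m} ∂s^{m} (a constant, since r_l is homogeneous of degree i−1) has determinant (2β − 2α)^{i(i−1)/2}. In particular M is invertible whenever α ≠ β. -/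
/-! Since `t + 2βs = (t + 2αs) + (2β - 2α)s`, the binomial theorem gives
`r_l = ∑_k C(l, k) (2β - 2α)^k s^k (t + 2αs)^(i-1-k)`. So `M = Q T`, where `Q` is the coefficient
matrix of the forms `s^k (t + 2αs)^(i-1-k)`, lower unitriangular because `s^k` divides the `k`-th
one, and `T = (C(l, k) (2β - 2α)^k)` is upper triangular with diagonal `(2β - 2α)^k`. -/

open MvPolynomial Finset

theorem pow_sub_mul_add_pow {R : Type*} [CommSemiring R] (x y : R) {n l : ℕ} (hl : l ≤ n) :
    x ^ (n - l) * (x + y) ^ l = ∑ k ∈ range (l + 1), (l.choose k : R) * y ^ k * x ^ (n - k) := by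
  rw [add_comm x y, add_pow, mul_sum]
  refine sum_congr rfl fun k hk => ?_
  rw [show n - k = n - l + (l - k) by have := mem_range.1 hk; omega, pow_add]
  ring

namespace MvPolynomial

section CommSemiring

variable {σ R : Type*} [CommSemiring R]

def coeffMatrix {ι κ : Type*} (e : ι → σ →₀ ℕ) (p : κ → MvPolynomial σ R) : Matrix ι κ R :=
  Matrix.of fun m l => coeff (e m) (p l)

theorem coeffMatrix_sum_C_mul {ι κ ν : Type*} [Fintype κ] (e : ι → σ →₀ ℕ)
    (q : κ → MvPolynomial σ R) (T : Matrix κ ν R) :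
    coeffMatrix e (fun l => ∑ k, C (T k l) * q k) = coeffMatrix e q * T := by
  ext m l
  simp only [coeffMatrix, Matrix.of_apply, Matrix.mul_apply, coeff_sum, coeff_C_mul,
    mul_comm (T _ l)]

theorem coeff_X_pow_mul_eq_zero_of_lt {j : σ} {k : ℕ} {d : σ →₀ ℕ} (h : d j < k)
    (p : MvPolynomial σ R) : coeff d (X j ^ k * p) = 0 := by
  rw [X_pow_eq_monomial, coeff_monomial_mul', if_neg]
  exact fun hle => h.not_ge (by simpa using hle j)

theorem coeff_single_X_add_C_mul_X_pow [DecidableEq σ] {i j : σ} (hij : i ≠ j) (a : R) (d : ℕ) :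
    coeff (Finsupp.single i d) ((X i + C a * X j) ^ d) = 1 := by
  induction d with
  | zero => simp
  | succ d ih =>
    have hj : j ∉ (Finsupp.single i (d + 1)).support := by simp [hij.symm]
    rw [pow_succ, mul_add, mul_left_comm, coeff_add, coeff_C_mul, coeff_mul_X' _ j, if_neg hj,
      Finsupp.single_add, coeff_mul_X, ih, mul_zero, add_zero]

theorem coeff_single_add_X_pow_mul (j : σ) (k : ℕ) (d : σ →₀ ℕ) (p : MvPolynomial σ R) :
    coeff (Finsupp.single j k + d) (X j ^ k * p) = coeff d p := by
  rw [X_pow_eq_monomial, coeff_monomial_mul, one_mul]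

end CommSemiring

/-- The exponent of `t^(n-m) s^m`, where `t = X 0` and `s = X 1`. -/
noncomputable def binaryFormExponent (n m : ℕ) : Fin 2 →₀ ℕ :=
  Finsupp.single 0 (n - m) + Finsupp.single 1 m

section CommRing

variable {R : Type*} [CommRing R]

theorem X_add_C_mul_X_pow_mul_pow_eq_sum (a b : R) {i : ℕ} (l : Fin i) :
    ((X 0 + C a * X 1) ^ (i - 1 - l) * (X 0 + C b * X 1) ^ (l : ℕ) : MvPolynomial (Fin 2) R) =
      ∑ k : Fin i, C (((l : ℕ).choose k : R) * (b - a) ^ (k : ℕ)) *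
        (X 1 ^ (k : ℕ) * (X 0 + C a * X 1) ^ (i - 1 - k)) := by
  have hb : (X 0 + C b * X 1 : MvPolynomial (Fin 2) R) = X 0 + C a * X 1 + C (b - a) * X 1 := by
    rw [map_sub]; ring
  rw [hb, pow_sub_mul_add_pow _ _ (Nat.le_sub_one_of_lt l.isLt),
    Fin.sum_univ_eq_sum_range (fun k => C (((l : ℕ).choose k : R) * (b - a) ^ k) *
      (X 1 ^ k * (X 0 + C a * X 1) ^ (i - 1 - k))) i,
    ← sum_subset (range_subset_range.2 l.isLt) fun k _ hk => ?_]
  · refine sum_congr rfl fun k _ => ?_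
    rw [mul_pow, ← C_pow, map_mul, map_natCast]
    ring
  · rw [Nat.choose_eq_zero_of_lt (by simpa using hk)]
    simp

theorem det_coeffMatrix_X_pow_mul_X_add_C_mul_X_pow (a : R) (i : ℕ) :
    (coeffMatrix (fun m : Fin i => binaryFormExponent (i - 1) m)
      (fun k : Fin i => (X 1 ^ (k : ℕ) * (X 0 + C a * X 1) ^ (i - 1 - k) :
        MvPolynomial (Fin 2) R))).det = 1 := by
  rw [Matrix.det_of_isLowerTriangular]
  · refine prod_eq_one fun k _ => ?_
    rw [coeffMatrix, Matrix.of_apply, binaryFormExponent, add_comm, coeff_single_add_X_pow_mul]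
    exact coeff_single_X_add_C_mul_X_pow (by decide) a _
  · intro m k hmk
    exact coeff_X_pow_mul_eq_zero_of_lt (by simpa [binaryFormExponent] using hmk) _

theorem det_choose_mul_pow (c : R) (i : ℕ) :
    (Matrix.of fun k l : Fin i => ((l : ℕ).choose k : R) * c ^ (k : ℕ)).det =
      c ^ (i * (i - 1) / 2) := by
  rw [Matrix.det_of_isUpperTriangular]
  · simp only [Matrix.of_apply, Nat.choose_self, Nat.cast_one, one_mul]
    rw [prod_pow_eq_pow_sum, Fin.sum_univ_eq_sum_range (·) i, sum_range_id]
  · intro k l hlk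
    simp [Nat.choose_eq_zero_of_lt (show (l : ℕ) < k from hlk)]

theorem det_coeffMatrix_X_add_C_mul_X_pow_mul_pow (a b : R) (i : ℕ) :
    (coeffMatrix (fun m : Fin i => binaryFormExponent (i - 1) m)
      (fun l : Fin i => ((X 0 + C a * X 1) ^ (i - 1 - l) * (X 0 + C b * X 1) ^ (l : ℕ) :
        MvPolynomial (Fin 2) R))).det = (b - a) ^ (i * (i - 1) / 2) := by
  have hfactor := coeffMatrix_sum_C_mul (fun m : Fin i => binaryFormExponent (i - 1) m)
    (fun k : Fin i => X 1 ^ (k : ℕ) * (X 0 + C a * X 1) ^ (i - 1 - k))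
    (Matrix.of fun k l : Fin i => ((l : ℕ).choose k : R) * (b - a) ^ (k : ℕ))
  simp only [Matrix.of_apply, ← X_add_C_mul_X_pow_mul_pow_eq_sum] at hfactor
  rw [hfactor, Matrix.det_mul, det_coeffMatrix_X_pow_mul_X_add_C_mul_X_pow, det_choose_mul_pow,
    one_mul]

end CommRing

end MvPolynomial

theorem transverse_coefficient_matrix_det_general (i : ℕ) (α β : ℝ) :
    Matrix.det (Matrix.of fun m l : Fin i =>
        MvPolynomial.coeff
          (Finsupp.single 0 (i - 1 - (m : ℕ)) + Finsupp.single 1 (m : ℕ))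
          ((MvPolynomial.X 0 + MvPolynomial.C (2 * α) * MvPolynomial.X 1)
              ^ (i - 1 - (l : ℕ)) *
            (MvPolynomial.X 0 + MvPolynomial.C (2 * β) * MvPolynomial.X 1)
              ^ (l : ℕ) : MvPolynomial (Fin 2) ℝ))
      = (2 * β - 2 * α) ^ (i * (i - 1) / 2) ∧
    (α ≠ β → IsUnit (Matrix.of fun m l : Fin i =>
        MvPolynomial.coeff
          (Finsupp.single 0 (i - 1 - (m : ℕ)) + Finsupp.single 1 (m : ℕ))
          ((MvPolynomial.X 0 + MvPolynomial.C (2 * α) * MvPolynomial.X 1)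
              ^ (i - 1 - (l : ℕ)) *
            (MvPolynomial.X 0 + MvPolynomial.C (2 * β) * MvPolynomial.X 1)
              ^ (l : ℕ) : MvPolynomial (Fin 2) ℝ))) := by
  have hdet := det_coeffMatrix_X_add_C_mul_X_pow_mul_pow (2 * α) (2 * β) i
  refine ⟨hdet, fun hαβ => ?_⟩
  rw [Matrix.isUnit_iff_isUnit_det]
  exact hdet ▸ (pow_ne_zero _ (sub_ne_zero.2 fun h => hαβ (by linarith))).isUnit

theorem transverse_coefficient_matrix_det (i : ℕ) (hi : 1 ≤ i) (α β : ℝ) :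
    Matrix.det (Matrix.of fun m l : Fin i =>
        MvPolynomial.coeff
          (Finsupp.single 0 (i - 1 - (m : ℕ)) + Finsupp.single 1 (m : ℕ))
          ((MvPolynomial.X 0 + MvPolynomial.C (2 * α) * MvPolynomial.X 1)
              ^ (i - 1 - (l : ℕ)) *
            (MvPolynomial.X 0 + MvPolynomial.C (2 * β) * MvPolynomial.X 1)
              ^ (l : ℕ) : MvPolynomial (Fin 2) ℝ))
      = (2 * β - 2 * α) ^ (i * (i - 1) / 2) ∧
    (α ≠ β → IsUnit (Matrix.of fun m l : Fin i =>
        MvPolynomial.coeff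
          (Finsupp.single 0 (i - 1 - (m : ℕ)) + Finsupp.single 1 (m : ℕ))
          ((MvPolynomial.X 0 + MvPolynomial.C (2 * α) * MvPolynomial.X 1)
              ^ (i - 1 - (l : ℕ)) *
            (MvPolynomial.X 0 + MvPolynomial.C (2 * β) * MvPolynomial.X 1)
              ^ (l : ℕ) : MvPolynomial (Fin 2) ℝ))) :=
  transverse_coefficient_matrix_det_general i α β
end

section
/- Let k ≥ 1 and let α, β be distinct real numbers. Then there exist real numbers w₁, …, w_{2k} and c such that the polynomial q(t) = t^{2k+2} − Σ_{i=1}^{2k} w_i t^i − c satisfies q^{(l)}(α) = q^{(l)}(β) = 0 for all l = 1, …, k. (Note that the coefficient of t^{2k+1} in q is required to be zero.) -/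
/-!
Take `q' = (2k+2) (t-α)^k (t-β)^k (t + k(α+β))`. It vanishes to order `k` at `α` and `β`, and the
root `-k(α+β)` of the last factor makes the `t^{2k}` coefficient vanish, so `q'/(2k+2)` is monic of
degree `2k+1` with no `t^{2k}` term. The antiderivative `q` of `q'` with `q(0) = 0` is therefore
`t^{2k+2}` plus terms of degrees `1, …, 2k`, and `q^{(l)} = (q')^{(l-1)}` vanishes at `α` and `β`
for `1 ≤ l ≤ k`.
-/

open Polynomial

namespace Polynomial

section Calculus

variable {𝕜 : Type*} [NontriviallyNormedField 𝕜]

theorem iteratedDeriv_eval (p : 𝕜[X]) (n : ℕ) :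
    iteratedDeriv n (fun x => p.eval x) = fun x => (derivative^[n] p).eval x := by
  induction n with
  | zero => simp
  | succ n ih =>
    rw [iteratedDeriv_succ, ih, Function.iterate_succ_apply']
    funext x
    exact Polynomial.deriv _

theorem iteratedDeriv_eval_eq_zero_of_pow_dvd_derivative {p : 𝕜[X]} {a : 𝕜} {k l : ℕ}
    (h : (X - C a) ^ k ∣ derivative p) (hl : 1 ≤ l) (hlk : l ≤ k) :
    iteratedDeriv l (fun x => p.eval x) a = 0 := by
  obtain ⟨j, rfl⟩ := Nat.exists_eq_add_of_le' hl
  rw [iteratedDeriv_eval, Function.iterate_succ_apply]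
  exact dvd_iff_isRoot.mp
    ((dvd_pow_self _ (by omega)).trans (pow_sub_dvd_iterate_derivative_of_pow_dvd j h))

end Calculus

theorem derivative_X_pow_add_sum_eq_C_mul {K : Type*} [Field K] [CharZero K] {n : ℕ} {M : K[X]}
    (hM : M.Monic) (hdeg : M.natDegree = n + 1) (hnext : M.nextCoeff = 0) :
    derivative (X ^ (n + 2) + ∑ i : Fin n, C ((n + 2) * M.coeff i / (i + 1)) * X ^ ((i : ℕ) + 1))
      = C ((n : K) + 2) * M := by
  have hM_sum : M = ∑ i ∈ Finset.range n, C (M.coeff i) * X ^ i + X ^ (n + 1) := by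
    have htop : M.coeff (n + 1) = 1 := hdeg ▸ hM.coeff_natDegree
    have hsub : M.coeff n = 0 := by
      rwa [nextCoeff_of_natDegree_pos (by omega), hdeg, Nat.add_sub_cancel] at hnext
    conv_lhs => rw [M.as_sum_range_C_mul_X_pow' (n := n + 2) (by omega)]
    simp [Finset.sum_range_succ, htop, hsub]
  have hterm (i : ℕ) : derivative (C ((n + 2) * M.coeff i / (i + 1)) * X ^ (i + 1)) =
      C ((n + 2) * M.coeff i) * X ^ i := by
    rw [derivative_C_mul_X_pow]
    push_cast
    rw [div_mul_cancel₀ _ (Nat.cast_add_one_ne_zero i)]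
  rw [derivative_add, derivative_sum, derivative_X_pow]
  simp only [hterm]
  rw [Fin.sum_univ_eq_sum_range (fun i => C ((n + 2) * M.coeff i) * X ^ i)]
  conv_rhs => rw [hM_sum]
  simp only [mul_add, Finset.mul_sum, C_mul, mul_assoc]
  push_cast
  ring

section FlatPolynomial

variable {R : Type*} [CommRing R]

noncomputable def flatPolynomial (k : ℕ) (α β : R) : R[X] :=
  (X - C α) ^ k * (X - C β) ^ k * (X + C (k * (α + β)))

theorem monic_flatPolynomial (k : ℕ) (α β : R) : (flatPolynomial k α β).Monic :=
  (((monic_X_sub_C α).pow k).mul ((monic_X_sub_C β).pow k)).mul (monic_X_add_C _)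

theorem natDegree_flatPolynomial [Nontrivial R] (k : ℕ) (α β : R) :
    (flatPolynomial k α β).natDegree = 2 * k + 1 := by
  rw [flatPolynomial, (((monic_X_sub_C α).pow k).mul ((monic_X_sub_C β).pow k)).natDegree_mul
      (monic_X_add_C _), ((monic_X_sub_C α).pow k).natDegree_mul ((monic_X_sub_C β).pow k),
    (monic_X_sub_C α).natDegree_pow, (monic_X_sub_C β).natDegree_pow, natDegree_X_sub_C,
    natDegree_X_sub_C, natDegree_X_add_C]
  ring

theorem nextCoeff_flatPolynomial (k : ℕ) (α β : R) : (flatPolynomial k α β).nextCoeff = 0 := by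
  rw [flatPolynomial, (((monic_X_sub_C α).pow k).mul ((monic_X_sub_C β).pow k)).nextCoeff_mul
      (monic_X_add_C _), ((monic_X_sub_C α).pow k).nextCoeff_mul ((monic_X_sub_C β).pow k),
    (monic_X_sub_C α).nextCoeff_pow, (monic_X_sub_C β).nextCoeff_pow,
    nextCoeff_X_sub_C, nextCoeff_X_sub_C, nextCoeff_X_add_C, nsmul_eq_mul, nsmul_eq_mul]
  ring

theorem X_sub_C_pow_dvd_flatPolynomial_left (k : ℕ) (α β : R) :
    (X - C α) ^ k ∣ flatPolynomial k α β :=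
  (dvd_mul_right _ _).mul_right _

theorem X_sub_C_pow_dvd_flatPolynomial_right (k : ℕ) (α β : R) :
    (X - C β) ^ k ∣ flatPolynomial k α β :=
  (dvd_mul_left _ _).mul_right _

end FlatPolynomial

end Polynomial

theorem even_monic_with_flat_points_general (k : ℕ) (α β : ℝ) :
    ∃ (w : Fin (2 * k) → ℝ) (c : ℝ),
      ∀ l : ℕ, 1 ≤ l → l ≤ k →
        iteratedDeriv l
            (fun t : ℝ => t ^ (2 * k + 2) - (∑ i, w i * t ^ ((i : ℕ) + 1)) - c) α = 0 ∧
        iteratedDeriv l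
            (fun t : ℝ => t ^ (2 * k + 2) - (∑ i, w i * t ^ ((i : ℕ) + 1)) - c) β = 0 := by
  set M := flatPolynomial k α β
  set q : ℝ[X] := X ^ (2 * k + 2) +
    ∑ i : Fin (2 * k), C ((((2 * k : ℕ) : ℝ) + 2) * M.coeff i / (i + 1)) * X ^ ((i : ℕ) + 1)
  have hq : derivative q = C (((2 * k : ℕ) : ℝ) + 2) * M :=
    derivative_X_pow_add_sum_eq_C_mul (monic_flatPolynomial k α β)
      (natDegree_flatPolynomial k α β) (nextCoeff_flatPolynomial k α β)
  refine ⟨fun i => -((((2 * k : ℕ) : ℝ) + 2) * M.coeff i / (i + 1)), 0, ?_⟩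
  have hq_eval : (fun t : ℝ => t ^ (2 * k + 2) -
      (∑ i : Fin (2 * k), -((((2 * k : ℕ) : ℝ) + 2) * M.coeff i / (i + 1)) * t ^ ((i : ℕ) + 1)) - 0)
      = fun t => q.eval t := by
    funext t
    simp [q, eval_finsetSum, Finset.sum_neg_distrib]
  intro l hl hlk
  rw [hq_eval]
  exact ⟨iteratedDeriv_eval_eq_zero_of_pow_dvd_derivative
      (hq ▸ (X_sub_C_pow_dvd_flatPolynomial_left k α β).mul_left _) hl hlk,
    iteratedDeriv_eval_eq_zero_of_pow_dvd_derivative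
      (hq ▸ (X_sub_C_pow_dvd_flatPolynomial_right k α β).mul_left _) hl hlk⟩

theorem even_monic_with_flat_points (k : ℕ) (hk : 1 ≤ k) (α β : ℝ) (hαβ : α ≠ β) :
    ∃ (w : Fin (2 * k) → ℝ) (c : ℝ),
      ∀ l : ℕ, 1 ≤ l → l ≤ k →
        iteratedDeriv l
            (fun t : ℝ => t ^ (2 * k + 2) - (∑ i, w i * t ^ ((i : ℕ) + 1)) - c) α = 0 ∧
        iteratedDeriv l
            (fun t : ℝ => t ^ (2 * k + 2) - (∑ i, w i * t ^ ((i : ℕ) + 1)) - c) β = 0 :=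
  even_monic_with_flat_points_general k α β
end
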